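/- Let A, B, C be subspaces of E with A = B, and let o be an E-orbit contained in X_A. Then the orbits of the E × B-action on X²_{AC} given by (e,b)·(x,y) = (e+b+x, e+y) whose first projection is o coincide with the E-orbits (for the diagonal E-action) on X²_{AC} whose first projection is o; consequently dim [[oB]] = ∑_{C ⊆ E} |A ∩ C| · (number of E-orbits in o × X_C). -/
import Mathlib


open scoped Classical

set_option linter.unusedSectionVars false

noncomputable section

namespace Lusztig

variable (E X : Type) [AddCommGroup E] [Module (ZMod 2) E] [Fintype E]
  [Fintype X] [AddAction E X]

/-- The stabilizer of `x` in `E`, as a subset of `E`. -/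
def stabSet (x : X) : Set E := {e : E | e +ᵥ x = x}

/-- `X_A`: the set of points of `X` whose stabilizer in `E` equals `A`. -/
def XA (A : Submodule (ZMod 2) E) : Set X := {x : X | stabSet E X x = (A : Set E)}

/-- `X²_{AB} = X_A × X_B`. -/
def X2 (A B : Submodule (ZMod 2) E) : Set (X × X) := (XA E X A) ×ˢ (XA E X B)

/-- The `E`-orbit of `x` in `X`. -/
def orb (x : X) : Set X := {y : X | ∃ e : E, y = e +ᵥ x}

/-- The `E`-orbit of `(x,y)` for the diagonal action of `E` on `X × X`. -/
def orb2 (x y : X) : Set (X × X) := {q : X × X | ∃ e : E, q = (e +ᵥ x, e +ᵥ y)}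

/-- `O` is an `E`-orbit (for the diagonal action) contained in `X²_{AB}`. -/
def IsOrb2 (A B : Submodule (ZMod 2) E) (O : Set (X × X)) : Prop :=
  ∃ x y : X, x ∈ XA E X A ∧ y ∈ XA E X B ∧ O = orb2 E X x y

/-- The `E × B`-orbit of `(x,y)` for the action `(e,b)·(x,y) = (e+b+x, e+y)`. -/
def orbEB (B : Submodule (ZMod 2) E) (x y : X) : Set (X × X) :=
  {q : X × X | ∃ e b : E, b ∈ B ∧ q = ((e + b) +ᵥ x, e +ᵥ y)}

/-- `M` is an `E × B`-orbit contained in `X²_{AC}` for the action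
`(e,b)·(x,y) = (e+b+x, e+y)`. -/
def IsOrbEB (A B C : Submodule (ZMod 2) E) (M : Set (X × X)) : Prop :=
  ∃ x y : X, x ∈ XA E X A ∧ y ∈ XA E X C ∧ M = orbEB E X B x y

/-- Image under the first projection. -/
def p1 (S : Set (X × X)) : Set X := Prod.fst '' S

/-- Image under the second projection. -/
def p2 (S : Set (X × X)) : Set X := Prod.snd '' S

/-- `U_{ABC} = {(a,b,c) ∈ A × B × C : a + b + c = 0}`. -/
def UABC (A B C : Submodule (ZMod 2) E) : Set (E × E × E) :=
  {t : E × E × E | t.1 ∈ A ∧ t.2.1 ∈ B ∧ t.2.2 ∈ C ∧ t.1 + t.2.1 + t.2.2 = 0}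

/-- `X̄_C`: the set of `E`-orbits contained in `X_C`. -/
def barX (C : Submodule (ZMod 2) E) : Set (Set X) :=
  {s : Set X | ∃ x ∈ XA E X C, s = orb E X x}

/-- The dual (space of linear forms `P → ℤ/2`) of a subspace `P` of `E`. -/
abbrev Dl (P : Submodule (ZMod 2) E) : Type := ↥P →ₗ[ZMod 2] ZMod 2

/-- Restriction of a linear form along an inclusion of subspaces. -/
def res {P Q : Submodule (ZMod 2) E} (h : P ≤ Q) (φ : Dl E Q) : Dl E P :=
  φ.comp (Submodule.inclusion h)

theorem leAB (A B C : Submodule (ZMod 2) E) : A ⊓ B ⊓ C ≤ A ⊓ B := inf_le_left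
theorem leBC (A B C : Submodule (ZMod 2) E) : A ⊓ B ⊓ C ≤ B ⊓ C :=
  le_inf (inf_le_left.trans inf_le_right) inf_le_right
theorem leAC (A B C : Submodule (ZMod 2) E) : A ⊓ B ⊓ C ≤ A ⊓ C :=
  le_inf (inf_le_left.trans inf_le_left) inf_le_right
theorem leBA (A B : Submodule (ZMod 2) E) : A ⊓ B ≤ B ⊓ A := le_inf inf_le_right inf_le_left

/-- The convolution product `𝓕_{AB} × 𝓕_{BC} → 𝓕_{AC}`. -/
def conv (A B C : Submodule (ZMod 2) E)
    (f₁ : (X × X) × Dl E (A ⊓ B) → ℂ) (f₂ : (X × X) × Dl E (B ⊓ C) → ℂ) :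
    (X × X) × Dl E (A ⊓ C) → ℂ :=
  fun p =>
    (∑ᶠ (y : X) (_ : y ∈ XA E X B) (ε₁ : Dl E (A ⊓ B)) (ε₂ : Dl E (B ⊓ C))
        (_ : res E (leAB E A B C) ε₁ + res E (leBC E A B C) ε₂
              + res E (leAC E A B C) p.2 = 0),
        f₁ ((p.1.1, y), ε₁) * f₂ ((y, p.1.2), ε₂)) *
      (Nat.card ↥(A ⊓ B ⊓ C) : ℂ) / (Nat.card ↥(A ⊓ C) : ℂ)

/-- The defining conditions for membership in `𝓕_{AB}`: supported on `X²_{AB}` and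
invariant under the diagonal `E`-action. -/
def MemF (A B : Submodule (ZMod 2) E) (f : (X × X) × Dl E (A ⊓ B) → ℂ) : Prop :=
  (∀ p : (X × X) × Dl E (A ⊓ B), p.1 ∉ X2 E X A B → f p = 0) ∧
  (∀ (e : E) (x y : X) (ε : Dl E (A ⊓ B)), f ((e +ᵥ x, e +ᵥ y), ε) = f ((x, y), ε))

/-- `𝓕_{AB}` as a subspace of the space of all functions. -/
def FAB (A B : Submodule (ZMod 2) E) : Submodule ℂ ((X × X) × Dl E (A ⊓ B) → ℂ) where
  carrier := {f | MemF E X A B f}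
  add_mem' := by
    intro a b ha hb
    exact ⟨fun p hp => by simp [ha.1 p hp, hb.1 p hp],
      fun e x y ε => by simp [Pi.add_apply, ha.2 e x y ε, hb.2 e x y ε]⟩
  zero_mem' := ⟨fun p hp => rfl, fun e x y ε => rfl⟩
  smul_mem' := by
    intro c a ha
    exact ⟨fun p hp => by simp [Pi.smul_apply, ha.1 p hp],
      fun e x y ε => by simp [Pi.smul_apply, ha.2 e x y ε]⟩

/-- `[Ξ]^ε`. -/
def br (A B : Submodule (ZMod 2) E) (Ξ : Set (X × X)) (ε : Dl E (A ⊓ B)) :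
    (X × X) × Dl E (A ⊓ B) → ℂ :=
  fun p => if p.1 ∈ Ξ ∧ p.2 = ε then 1 else 0

/-- The ambient space of `𝓕 = ⊕_{A,B} 𝓕_{AB}` (all summands at once). -/
abbrev FF : Type := ∀ A B : Submodule (ZMod 2) E, (X × X) × Dl E (A ⊓ B) → ℂ

/-- The embedding of the `(A,B)` summand into `𝓕`. -/
def emb (A B : Submodule (ZMod 2) E) (f : (X × X) × Dl E (A ⊓ B) → ℂ) : FF E X :=
  fun A' B' p =>
    if h : A = A' ∧ B = B' then f (p.1, cast (by rw [h.1, h.2]) p.2) else 0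

/-- `𝓕` as a subspace of `FF`: componentwise supported on `X²_{AB}` and `E`-invariant. -/
def FFsub : Submodule ℂ (FF E X) where
  carrier := {g | ∀ A B, MemF E X A B (g A B)}
  add_mem' := by
    intro a b ha hb A B
    exact ⟨fun p hp => by simp [(ha A B).1 p hp, (hb A B).1 p hp],
      fun e x y ε => by simp [(ha A B).2 e x y ε, (hb A B).2 e x y ε]⟩
  zero_mem' := fun A B => ⟨fun p hp => rfl, fun e x y ε => rfl⟩
  smul_mem' := by
    intro c a ha A B
    exact ⟨fun p hp => by simp [(ha A B).1 p hp],
      fun e x y ε => by simp [(ha A B).2 e x y ε]⟩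

/-- The product on `𝓕` (zero between summands `𝓕_{AB}`, `𝓕_{B'C}` with `B ≠ B'`). -/
def mulFF (g h : FF E X) : FF E X :=
  fun A C => ∑ᶠ B : Submodule (ZMod 2) E, conv E X A B C (g A B) (h B C)

/-- The diagonal `Δ_A ⊆ X²_{AA}`. -/
def diagSet (A : Submodule (ZMod 2) E) : Set (X × X) :=
  {q : X × X | q.1 ∈ XA E X A ∧ q.2 = q.1}

/-- The element `∑_A [Δ_A]^0` of `𝓕`. -/
def unitFF : FF E X :=
  ∑ᶠ A : Submodule (ZMod 2) E, emb E X A A (br E X A A (diagSet E X A) 0)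

/-- The map `f ↦ f^#` on `𝓕`. -/
def shFF (g : FF E X) : FF E X :=
  fun A B p => g B A ((p.1.2, p.1.1), res E (leBA E B A) p.2)

/-- `𝒪 • 𝒪'`. -/
def bullet (O O' : Set (X × X)) : Set (X × X) :=
  {q : X × X | ∃ y : X, (q.1, y) ∈ O ∧ (y, q.2) ∈ O'}

/-- `∑_{ε ∈ α̃} [𝓜]^ε ∈ 𝓕_{AC}`, where `α̃` is the fibre of
`(A∩C)* → (A∩B∩C)*` over `α`. -/
def bSum (A B C : Submodule (ZMod 2) E) (M : Set (X × X)) (α : Dl E (A ⊓ B ⊓ C)) :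
    (X × X) × Dl E (A ⊓ C) → ℂ :=
  ∑ᶠ (ε : Dl E (A ⊓ C)) (_ : res E (leAC E A B C) ε = α), br E X A C M ε

/-- The set `𝓑_{oBC} ⊆ 𝓕` (embedded in `FF`). -/
def BoBC (A B C : Submodule (ZMod 2) E) (o : Set X) : Set (FF E X) :=
  {g | ∃ (M : Set (X × X)) (α : Dl E (A ⊓ B ⊓ C)),
      IsOrbEB E X A B C M ∧ p1 X M = o ∧ g = emb E X A C (bSum E X A B C M α)}

/-- The set `𝓑_{oB} = ⊔_C 𝓑_{oBC}`. -/
def BoB (A B : Submodule (ZMod 2) E) (o : Set X) : Set (FF E X) :=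
  ⋃ C : Submodule (ZMod 2) E, BoBC E X A B C o

/-- `[[oB]]`, the `ℂ`-span of `𝓑_{oB}`. -/
def ooB (A B : Submodule (ZMod 2) E) (o : Set X) : Submodule ℂ (FF E X) :=
  Submodule.span ℂ (BoB E X A B o)


/-! ### Auxiliary lemmas -/

lemma vadd_eq_self_of_mem {A : Submodule (ZMod 2) E} {x : X} (hx : x ∈ XA E X A)
    {b : E} (hb : b ∈ A) : b +ᵥ x = x := by
  have hb' : b ∈ stabSet E X x := by rw [show stabSet E X x = (A : Set E) from hx]; exact hb
  exact hb'

lemma stabSet_vadd (e : E) (x : X) : stabSet E X (e +ᵥ x) = stabSet E X x := by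
  ext f
  simp only [stabSet, Set.mem_setOf_eq]
  constructor
  · intro h
    have h2 : (f + e) +ᵥ x = e +ᵥ x := by rw [add_vadd]; exact h
    rw [add_comm, add_vadd] at h2
    exact vadd_left_cancel e h2
  · intro h
    rw [← add_vadd, add_comm, add_vadd, h]

lemma mem_XA_vadd {A : Submodule (ZMod 2) E} {x : X} (hx : x ∈ XA E X A) (e : E) :
    e +ᵥ x ∈ XA E X A := by
  show stabSet E X (e +ᵥ x) = (A : Set E)
  rw [stabSet_vadd]; exact hx

lemma mem_orb_self (x : X) : x ∈ orb E X x := ⟨0, (zero_vadd E x).symm⟩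

lemma orb_vadd (e : E) (x : X) : orb E X (e +ᵥ x) = orb E X x := by
  ext z
  constructor
  · rintro ⟨f, rfl⟩; exact ⟨f + e, by rw [add_vadd]⟩
  · rintro ⟨f, rfl⟩; exact ⟨f - e, by rw [← add_vadd, sub_add_cancel]⟩

lemma orb2_self_mem (x y : X) : (x, y) ∈ orb2 E X x y :=
  ⟨0, by rw [zero_vadd, zero_vadd]⟩

lemma orb2_vadd (e : E) (x y : X) : orb2 E X (e +ᵥ x) (e +ᵥ y) = orb2 E X x y := by
  ext q
  constructor
  · rintro ⟨f, rfl⟩; exact ⟨f + e, by rw [add_vadd, add_vadd]⟩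
  · rintro ⟨f, rfl⟩; exact ⟨f - e, by rw [← add_vadd, ← add_vadd, sub_add_cancel]⟩

lemma orb2_eq_of_mem {x y z w : X} (h : (z, w) ∈ orb2 E X x y) :
    orb2 E X z w = orb2 E X x y := by
  obtain ⟨e, h⟩ := h
  have hz : z = e +ᵥ x := congrArg Prod.fst h
  have hw : w = e +ᵥ y := congrArg Prod.snd h
  rw [hz, hw, orb2_vadd]

lemma p1_orb2 (x y : X) : p1 X (orb2 E X x y) = orb E X x := by
  ext z
  constructor
  · rintro ⟨q, ⟨e, rfl⟩, rfl⟩; exact ⟨e, rfl⟩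
  · rintro ⟨e, rfl⟩; exact ⟨(e +ᵥ x, e +ᵥ y), ⟨e, rfl⟩, rfl⟩

lemma orbEB_eq_orb2 {A : Submodule (ZMod 2) E} {x : X} (hx : x ∈ XA E X A) (y : X) :
    orbEB E X A x y = orb2 E X x y := by
  ext q
  constructor
  · rintro ⟨e, b, hb, rfl⟩
    exact ⟨e, by rw [add_vadd, vadd_eq_self_of_mem E X hx hb]⟩
  · rintro ⟨e, rfl⟩
    exact ⟨e, 0, zero_mem A, by rw [add_zero]⟩

lemma part1 (A C : Submodule (ZMod 2) E) (o : Set X) :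
    {M : Set (X × X) | IsOrbEB E X A A C M ∧ p1 X M = o} =
      {M : Set (X × X) | IsOrb2 E X A C M ∧ p1 X M = o} := by
  ext M
  simp only [Set.mem_setOf_eq]
  constructor
  · rintro ⟨⟨x, y, hx, hy, rfl⟩, hp⟩
    rw [orbEB_eq_orb2 E X hx y] at hp ⊢
    exact ⟨⟨x, y, hx, hy, rfl⟩, hp⟩
  · rintro ⟨⟨x, y, hx, hy, rfl⟩, hp⟩
    exact ⟨⟨x, y, hx, hy, (orbEB_eq_orb2 E X hx y).symm⟩, hp⟩

theorem leACrev (A C : Submodule (ZMod 2) E) : A ⊓ C ≤ A ⊓ A ⊓ C :=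
  le_inf (le_inf inf_le_left inf_le_left) inf_le_right

lemma res_res_left (A C : Submodule (ZMod 2) E) (ε : Dl E (A ⊓ C)) :
    res E (leACrev E A C) (res E (leAC E A A C) ε) = ε :=
  LinearMap.ext fun v => congrArg ε (Subtype.ext rfl)

lemma res_res_right (A C : Submodule (ZMod 2) E) (α : Dl E (A ⊓ A ⊓ C)) :
    res E (leAC E A A C) (res E (leACrev E A C) α) = α :=
  LinearMap.ext fun v => congrArg α (Subtype.ext rfl)

lemma bSum_eq_br (A C : Submodule (ZMod 2) E) (M : Set (X × X)) (α : Dl E (A ⊓ A ⊓ C)) :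
    bSum E X A A C M α = br E X A C M (res E (leACrev E A C) α) := by
  rw [bSum]
  rw [finsum_eq_single _ (res E (leACrev E A C) α)
    (fun ε hε => by
      rw [finsum_eq_if, if_neg]
      intro h
      exact hε (by rw [← h, res_res_left]))]
  rw [finsum_eq_if, if_pos (res_res_right E A C α)]

/-- if `A = B`, the `E × B`-orbits on `X²_{AC}` with first projection `o`
coincide with the diagonal `E`-orbits with first projection `o`; consequently
`dim [[oB]] = ∑_C |A∩C| · #(E-orbits in o × X_C)`. -/
theorem statement18 (A B : Submodule (ZMod 2) E) (hAB : A = B)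
    (o : Set X) (ho : ∃ x ∈ XA E X A, o = orb E X x) :
    (∀ C : Submodule (ZMod 2) E,
      {M : Set (X × X) | IsOrbEB E X A B C M ∧ p1 X M = o} =
        {M : Set (X × X) | IsOrb2 E X A C M ∧ p1 X M = o}) ∧
    Module.finrank ℂ ↥(ooB E X A B o) =
      ∑ᶠ C : Submodule (ZMod 2) E,
        Nat.card ↥(A ⊓ C) *
          Nat.card ↥{s : Set (X × X) | ∃ x ∈ o, ∃ y ∈ XA E X C, s = orb2 E X x y} := by
  subst hAB
  obtain ⟨x₀, hx₀, rfl⟩ := ho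
  refine ⟨fun C => part1 E X A C (orb E X x₀), ?_⟩
  -- the orbit sets
  set o := orb E X x₀ with ho
  set K : Submodule (ZMod 2) E → Set (Set (X × X)) :=
    fun C => {M : Set (X × X) | IsOrb2 E X A C M ∧ p1 X M = o} with hKdef
  have hK : ∀ C, K C = {s : Set (X × X) | ∃ x ∈ o, ∃ y ∈ XA E X C, s = orb2 E X x y} := by
    intro C
    ext s
    constructor
    · rintro ⟨⟨x, y, hx, hy, rfl⟩, hp⟩
      refine ⟨x, ?_, y, hy, rfl⟩
      have hxo : orb E X x = o := by rw [← p1_orb2 E X x y, hp]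
      rw [← hxo]; exact mem_orb_self E X x
    · rintro ⟨x, hxo, y, hy, rfl⟩
      obtain ⟨e, rfl⟩ := hxo
      exact ⟨⟨e +ᵥ x₀, y, mem_XA_vadd E X hx₀ e, hy, rfl⟩,
        by rw [p1_orb2, orb_vadd]⟩
  -- finiteness
  haveI : Finite (Submodule (ZMod 2) E) :=
    Finite.of_injective _ (SetLike.coe_injective (A := Submodule (ZMod 2) E))
  haveI hDl : ∀ P : Submodule (ZMod 2) E, Finite (Dl E P) := fun P =>
    Finite.of_injective _ (DFunLike.coe_injective (F := ↥P →ₗ[ZMod 2] ZMod 2))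
  haveI : Fintype (Submodule (ZMod 2) E) := Fintype.ofFinite _
  haveI : ∀ C : Submodule (ZMod 2) E, Fintype (Dl E (A ⊓ C)) := fun C =>
    Fintype.ofFinite _
  haveI : ∀ C : Submodule (ZMod 2) E, Fintype ↥(K C) := fun C =>
    Fintype.ofFinite _
  -- the independent family
  set I := (C : Submodule (ZMod 2) E) × (Dl E (A ⊓ C) × ↥(K C)) with hI
  set ι : I → FF E X := fun i => emb E X A i.1 (br E X A i.1 i.2.2.1 i.2.1) with hι
  have hrange : BoB E X A A o = Set.range ι := by
    ext g
    constructor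
    · intro hg
      obtain ⟨_, ⟨C, rfl⟩, hgC⟩ := hg
      obtain ⟨M, α, hM, hp, rfl⟩ := hgC
      have hM2 : M ∈ K C := by
        have hmem : M ∈ {M : Set (X × X) | IsOrbEB E X A A C M ∧ p1 X M = o} := ⟨hM, hp⟩
        rw [part1 E X A C o] at hmem
        exact hmem
      exact ⟨⟨C, res E (leACrev E A C) α, ⟨M, hM2⟩⟩, by rw [hι, bSum_eq_br]⟩
    · rintro ⟨⟨C, ε, M, hM⟩, rfl⟩
      have hM' : M ∈ {M : Set (X × X) | IsOrbEB E X A A C M ∧ p1 X M = o} := by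
        rw [part1 E X A C o]; exact hM
      refine Set.mem_iUnion.2 ⟨C, M, res E (leAC E A A C) ε, hM'.1, hM'.2, ?_⟩
      rw [bSum_eq_br, res_res_left]
  -- linear independence
  have hli : LinearIndependent ℂ ι := by
    rw [Fintype.linearIndependent_iff]
    intro g hg i
    obtain ⟨C, ε, M, hM⟩ := i
    obtain ⟨x, y, hx, hy, hMo⟩ := hM.1
    have h0 := congrFun (congrFun (congrFun hg A) C) ((x, y), ε)
    simp only [Finset.sum_apply, Pi.smul_apply, Pi.zero_apply, smul_eq_mul] at h0
    rw [Finset.sum_eq_single (⟨C, ε, ⟨M, hM⟩⟩ : I)] at h0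
    · have hval : ι ⟨C, ε, ⟨M, hM⟩⟩ A C ((x, y), ε) = 1 := by
        show emb E X A C (br E X A C M ε) A C ((x, y), ε) = 1
        rw [emb, dif_pos ⟨rfl, rfl⟩]
        have hcast : cast (by rw [(⟨rfl, rfl⟩ : A = A ∧ C = C).1,
            (⟨rfl, rfl⟩ : A = A ∧ C = C).2]) ε = ε := rfl
        show br E X A C M _ ((x, y), _) = 1
        rw [br, if_pos]
        exact ⟨hMo ▸ orb2_self_mem E X x y, rfl⟩
      rw [hval, mul_one] at h0
      exact h0
    · rintro ⟨C', ε', M', hM'⟩ - hj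
      by_cases hC : C' = C
      · subst hC
        rw [mul_eq_zero]
        right
        show emb E X A C' (br E X A C' M' ε') A C' ((x, y), ε) = 0
        rw [emb, dif_pos ⟨rfl, rfl⟩]
        show br E X A C' M' ε' ((x, y), _) = 0
        rw [br, if_neg]
        rintro ⟨hmem, hε⟩
        have hεε : ε = ε' := hε
        obtain ⟨x', y', hx', hy', hM'o⟩ := hM'.1
        have hMM : M' = M := by
          rw [hM'o] at hmem
          rw [hM'o, hMo, ← orb2_eq_of_mem E X hmem]
        apply hj
        subst hεε
        subst hMM
        rfl
      · rw [mul_eq_zero]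
        right
        show emb E X A C' (br E X A C' M' ε') A C ((x, y), ε) = 0
        rw [emb, dif_neg]
        rintro ⟨-, hC'⟩
        exact hC hC'
    · intro hni
      exact absurd (Finset.mem_univ _) hni
  -- finrank computation
  have hspan : ooB E X A A o = Submodule.span ℂ (Set.range ι) := by
    rw [ooB, hrange]
  rw [hspan, finrank_span_eq_card hli]
  rw [Fintype.card_sigma]
  rw [finsum_eq_sum_of_fintype]
  apply Finset.sum_congr rfl
  intro C _
  rw [Fintype.card_prod]
  congr 1
  · -- card of dual
    haveI : Module.Finite (ZMod 2) ↥(A ⊓ C) := Module.Finite.of_finite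
    have e := (Module.finBasis (ZMod 2) ↥(A ⊓ C)).toDualEquiv
    rw [← Nat.card_eq_fintype_card]
    exact (Nat.card_congr e.toEquiv).symm
  · rw [← Nat.card_eq_fintype_card, hK C]

end Lusztig
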